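/- arXiv:1907.07869 — 3 statements merged into one kernel-verified Lean document; each statement's English description precedes it below -/
import Mathlib

section
/- With μ₁', μ₂, μ₄ the mean, second and fourth central moments of a finite discrete distribution supported in [m,M], one has μ₄ + 3μ₂² ≤ (M−m)²(μ₁'−m)(M−μ₁'). -/
/-!
Centre at the mean and put `a = μ₁' - m`, `b = M - μ₁'`, `y = x - μ₁'`. Since `(x - m)(M - x) ≥ 0`,
every point satisfies `y² ≤ L(y) := ab + (b - a) y`. Averaging gives `μ₂ ≤ ab` (Bhatia–Davis), and
squaring (both sides being nonnegative) and averaging gives `μ₄ ≤ (ab)² + (b - a)² μ₂`. As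
`(M - m)² (μ₁' - m)(M - μ₁') = (a + b)² ab = (b - a)² ab + 4 (ab)²`, the claim reduces to
`(b - a)² (ab - μ₂) + 3 (ab - μ₂)(ab + μ₂) ≥ 0`.
-/

open Finset

section Pointwise

variable {x m M : ℝ}

theorem sub_sq_le_of_mem_Icc (hx : x ∈ Set.Icc m M) (μ : ℝ) :
    (x - μ) ^ 2 ≤ (μ - m) * (M - μ) + ((M - μ) - (μ - m)) * (x - μ) := by
  nlinarith [mul_nonneg (sub_nonneg.2 hx.1) (sub_nonneg.2 hx.2)]

theorem sub_pow_four_le_of_mem_Icc (hx : x ∈ Set.Icc m M) (μ : ℝ) :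
    (x - μ) ^ 4 ≤ ((μ - m) * (M - μ) + ((M - μ) - (μ - m)) * (x - μ)) ^ 2 := by
  calc (x - μ) ^ 4 = ((x - μ) ^ 2) ^ 2 := by ring
    _ ≤ _ := pow_le_pow_left₀ (sq_nonneg _) (sub_sq_le_of_mem_Icc hx μ) 2

end Pointwise

namespace Finset

variable {ι : Type*} {s : Finset ι} {p x : ι → ℝ}

theorem sum_mul_sub_sum_mul_eq_zero (hps : ∑ i ∈ s, p i = 1) :
    ∑ i ∈ s, p i * (x i - ∑ j ∈ s, p j * x j) = 0 := by
  simp only [mul_sub, sum_sub_distrib, ← sum_mul, hps, one_mul, sub_self]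

section Affine

variable {y : ι → ℝ} (hps : ∑ i ∈ s, p i = 1) (hy : ∑ i ∈ s, p i * y i = 0) (c d : ℝ)
include hps hy

theorem sum_mul_affine_of_sum_mul_eq_zero : ∑ i ∈ s, p i * (c + d * y i) = c := by
  calc ∑ i ∈ s, p i * (c + d * y i) = c * ∑ i ∈ s, p i + d * ∑ i ∈ s, p i * y i := by
        simp only [mul_sum, ← sum_add_distrib]; exact sum_congr rfl fun i _ ↦ by ring
    _ = c := by rw [hps, hy]; ring

theorem sum_mul_affine_sq_of_sum_mul_eq_zero :
    ∑ i ∈ s, p i * (c + d * y i) ^ 2 = c ^ 2 + d ^ 2 * ∑ i ∈ s, p i * y i ^ 2 := by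
  calc ∑ i ∈ s, p i * (c + d * y i) ^ 2
      = c ^ 2 * ∑ i ∈ s, p i + 2 * c * d * ∑ i ∈ s, p i * y i
          + d ^ 2 * ∑ i ∈ s, p i * y i ^ 2 := by
        simp only [mul_sum, ← sum_add_distrib]; exact sum_congr rfl fun i _ ↦ by ring
    _ = c ^ 2 + d ^ 2 * ∑ i ∈ s, p i * y i ^ 2 := by rw [hps, hy]; ring

end Affine

section Moments

variable {m M : ℝ} (hx : ∀ i ∈ s, x i ∈ Set.Icc m M) (hp : ∀ i ∈ s, 0 ≤ p i)
  (hps : ∑ i ∈ s, p i = 1)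
include hx hp hps

/-- The Bhatia–Davis inequality for a finitely supported distribution. -/
theorem sum_mul_sub_mean_sq_le :
    ∑ i ∈ s, p i * (x i - ∑ j ∈ s, p j * x j) ^ 2
      ≤ (∑ j ∈ s, p j * x j - m) * (M - ∑ j ∈ s, p j * x j) := by
  set μ := ∑ j ∈ s, p j * x j
  calc ∑ i ∈ s, p i * (x i - μ) ^ 2
      ≤ ∑ i ∈ s, p i * ((μ - m) * (M - μ) + ((M - μ) - (μ - m)) * (x i - μ)) :=
        sum_le_sum fun i hi ↦
          mul_le_mul_of_nonneg_left (sub_sq_le_of_mem_Icc (hx i hi) μ) (hp i hi)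
    _ = (μ - m) * (M - μ) :=
        sum_mul_affine_of_sum_mul_eq_zero hps (sum_mul_sub_sum_mul_eq_zero hps) _ _

theorem sum_mul_sub_mean_pow_four_le :
    ∑ i ∈ s, p i * (x i - ∑ j ∈ s, p j * x j) ^ 4
      ≤ ((∑ j ∈ s, p j * x j - m) * (M - ∑ j ∈ s, p j * x j)) ^ 2
        + ((M - ∑ j ∈ s, p j * x j) - (∑ j ∈ s, p j * x j - m)) ^ 2
          * ∑ i ∈ s, p i * (x i - ∑ j ∈ s, p j * x j) ^ 2 := by
  set μ := ∑ j ∈ s, p j * x j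
  calc ∑ i ∈ s, p i * (x i - μ) ^ 4
      ≤ ∑ i ∈ s, p i * ((μ - m) * (M - μ) + ((M - μ) - (μ - m)) * (x i - μ)) ^ 2 :=
        sum_le_sum fun i hi ↦
          mul_le_mul_of_nonneg_left (sub_pow_four_le_of_mem_Icc (hx i hi) μ) (hp i hi)
    _ = _ := sum_mul_affine_sq_of_sum_mul_eq_zero hps (sum_mul_sub_sum_mul_eq_zero hps) _ _

end Moments

end Finset

theorem add_three_mul_sq_le_of_le {a b v f : ℝ} (hv : 0 ≤ v) (hvab : v ≤ a * b)
    (hf : f ≤ (a * b) ^ 2 + (b - a) ^ 2 * v) :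
    f + 3 * v ^ 2 ≤ (a + b) ^ 2 * a * b := by
  nlinarith [mul_nonneg (sq_nonneg (b - a)) (sub_nonneg.2 hvab),
    mul_nonneg (sub_nonneg.2 hvab) (add_nonneg hv (hv.trans hvab))]

theorem stmt_2 (n : ℕ) (m M : ℝ) (x p : Fin n → ℝ)
    (hx : ∀ i, x i ∈ Set.Icc m M) (hp : ∀ i, 0 ≤ p i) (hps : ∑ i, p i = 1)
    (μ1 μ2 μ4 : ℝ)
    (hμ1 : μ1 = ∑ i, p i * x i)
    (hμ2 : μ2 = ∑ i, p i * (x i - μ1) ^ 2)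
    (hμ4 : μ4 = ∑ i, p i * (x i - μ1) ^ 4) :
    μ4 + 3 * μ2 ^ 2 ≤ (M - m) ^ 2 * (μ1 - m) * (M - μ1) := by
  have hx' : ∀ i ∈ univ, x i ∈ Set.Icc m M := fun i _ ↦ hx i
  have hp' : ∀ i ∈ univ, 0 ≤ p i := fun i _ ↦ hp i
  have hμ2_nonneg : 0 ≤ μ2 := hμ2 ▸ sum_nonneg fun i _ ↦ mul_nonneg (hp i) (sq_nonneg _)
  have hμ2_le := sum_mul_sub_mean_sq_le hx' hp' hps
  have hμ4_le := sum_mul_sub_mean_pow_four_le hx' hp' hps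
  rw [← hμ1, ← hμ2] at hμ2_le
  rw [← hμ1, ← hμ2, ← hμ4] at hμ4_le
  have h := add_three_mul_sq_le_of_le hμ2_nonneg hμ2_le hμ4_le
  have hMm : M - m = (μ1 - m) + (M - μ1) := by ring
  rwa [hMm]
end

section
/- With μ₂, μ₄ the second and fourth central moments of a finite discrete distribution supported in [m,M], one has μ₄ + 3μ₂² ≤ (M−m)⁴/4. -/
/-!
Centre the data: `y i = x i - μ1` lies in `[a, b]` with `a = m - μ1`, `b = M - μ1`, and has mean
zero. On `[a, b]` both `y ^ 2` and `y ^ 4` lie below the affine functions that interpolate them at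
`a` and `b`; averaging kills the linear term, giving `μ2 ≤ -a b` and
`μ4 ≤ -a b (a ^ 2 + a b + b ^ 2)`. What remains is the inequality `(a b) ^ 2 ≤ ((a ^ 2 + b ^ 2) / 2) ^ 2`.
-/

open Finset

lemma sum_mul_le_of_le_affine {ι : Type*} (s : Finset ι) (p y z : ι → ℝ) (c d : ℝ)
    (hp : ∀ i ∈ s, 0 ≤ p i) (hps : ∑ i ∈ s, p i = 1) (hy : ∑ i ∈ s, p i * y i = 0)
    (hz : ∀ i ∈ s, z i ≤ c * y i + d) :
    ∑ i ∈ s, p i * z i ≤ d :=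
  calc ∑ i ∈ s, p i * z i ≤ ∑ i ∈ s, p i * (c * y i + d) :=
        sum_le_sum fun i hi => mul_le_mul_of_nonneg_left (hz i hi) (hp i hi)
    _ = c * ∑ i ∈ s, p i * y i + d * ∑ i ∈ s, p i := by
        simp only [mul_sum, ← sum_add_distrib]
        exact sum_congr rfl fun i _ => by ring
    _ = d := by rw [hy, hps]; ring

lemma sum_mul_sub_weighted_mean {ι : Type*} (s : Finset ι) (p x : ι → ℝ) (hps : ∑ i ∈ s, p i = 1) :
    ∑ i ∈ s, p i * (x i - ∑ j ∈ s, p j * x j) = 0 := by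
  simp only [mul_sub, sum_sub_distrib, ← sum_mul, hps, one_mul, sub_self]

lemma sq_le_chord {a b y : ℝ} (ha : a ≤ y) (hb : y ≤ b) :
    y ^ 2 ≤ (a + b) * y + -(a * b) := by
  nlinarith [mul_nonneg (sub_nonneg.2 ha) (sub_nonneg.2 hb)]

lemma pow_four_le_chord {a b y : ℝ} (ha : a ≤ y) (hb : y ≤ b) :
    y ^ 4 ≤ (a + b) * (a ^ 2 + b ^ 2) * y + -(a * b) * (a ^ 2 + a * b + b ^ 2) := by
  have hQ : 0 ≤ y ^ 2 + (a + b) * y + (a ^ 2 + a * b + b ^ 2) := by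
    nlinarith [sq_nonneg (2 * y + a + b), sq_nonneg (a + b), sq_nonneg (a - b)]
  -- `y ^ 4` minus the chord factors as `(y - a) (y - b) · hQ`
  nlinarith [mul_nonneg (mul_nonneg (sub_nonneg.2 ha) (sub_nonneg.2 hb)) hQ]

lemma quartic_chord_add_three_sq_chord_le (a b : ℝ) :
    -(a * b) * (a ^ 2 + a * b + b ^ 2) + 3 * (a * b) ^ 2 ≤ (b - a) ^ 4 / 4 := by
  nlinarith [sq_nonneg (a ^ 2 - b ^ 2)]

theorem stmt_3 (n : ℕ) (m M : ℝ) (x p : Fin n → ℝ)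
    (hx : ∀ i, x i ∈ Set.Icc m M) (hp : ∀ i, 0 ≤ p i) (hps : ∑ i, p i = 1)
    (μ1 μ2 μ4 : ℝ)
    (hμ1 : μ1 = ∑ i, p i * x i)
    (hμ2 : μ2 = ∑ i, p i * (x i - μ1) ^ 2)
    (hμ4 : μ4 = ∑ i, p i * (x i - μ1) ^ 4) :
    μ4 + 3 * μ2 ^ 2 ≤ (M - m) ^ 4 / 4 := by
  have hmean : ∑ i, p i * (x i - μ1) = 0 := hμ1 ▸ sum_mul_sub_weighted_mean _ p x hps
  have hlo i : m - μ1 ≤ x i - μ1 := sub_le_sub_right (hx i).1 _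
  have hhi i : x i - μ1 ≤ M - μ1 := sub_le_sub_right (hx i).2 _
  have h2 : μ2 ≤ -((m - μ1) * (M - μ1)) := hμ2 ▸
    sum_mul_le_of_le_affine _ p _ _ _ _ (fun i _ => hp i) hps hmean
      fun i _ => sq_le_chord (hlo i) (hhi i)
  have h4 := hμ4 ▸
    sum_mul_le_of_le_affine _ p _ _ _ _ (fun i _ => hp i) hps hmean
      fun i _ => pow_four_le_chord (hlo i) (hhi i)
  have h2nonneg : 0 ≤ μ2 := hμ2 ▸ sum_nonneg fun i _ => mul_nonneg (hp i) (sq_nonneg _)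
  have h2sq : μ2 ^ 2 ≤ ((m - μ1) * (M - μ1)) ^ 2 := by
    rw [← neg_sq ((m - μ1) * (M - μ1))]
    exact pow_le_pow_left₀ h2nonneg h2 2
  have hMm : M - m = (M - μ1) - (m - μ1) := by ring
  rw [hMm]
  linarith [quartic_chord_add_three_sq_chord_le (m - μ1) (M - μ1)]
end

section
/- For a finite discrete distribution supported in [m,M] with mean μ₁', second central moment μ₂ and third central moment μ₃, one has −(4/27)(μ₁'−m)⁵ ≤ μ₂μ₃ ≤ (4/27)(M−μ₁')⁵. -/
/-!
Centre the data at the mean: `yᵢ = xᵢ - μ₁'` satisfies `∑ pᵢ yᵢ = 0` and `yᵢ ≤ b := M - μ₁'`.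
Each term `pᵢ (b yᵢ + μ₂)² (yᵢ - b)` is nonpositive, and summing them gives
`b (b μ₃ + μ₂² - b² μ₂) ≤ 0`. Hence `b · μ₂μ₃ ≤ μ₂² (b² - μ₂) ≤ (4/27) b⁶`, the last step being
AM-GM for `μ₂/2, μ₂/2, b² - μ₂` (when `b = 0`, all `yᵢ ≤ 0` and `μ₃ ≤ 0`). The lower bound is the upper bound for the reflected data `-xᵢ`.
-/

open Finset

lemma mul_le_of_mul_add_sq_le {b s c : ℝ} (hb : 0 < b) (hs : 0 ≤ s)
    (h : b * c + s ^ 2 ≤ b ^ 2 * s) : s * c ≤ 4 / 27 * b ^ 5 := by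
  have amgm : s ^ 2 * (b ^ 2 - s) ≤ 4 / 27 * b ^ 6 := by
    nlinarith [mul_nonneg (sq_nonneg (3 * s - 2 * b ^ 2)) (by positivity : 0 ≤ 3 * s + b ^ 2)]
  have hscaled : b * (s * c) ≤ b * (4 / 27 * b ^ 5) := by nlinarith
  exact le_of_mul_le_mul_left hscaled hb

section CentralMoments

variable {ι : Type*} [Fintype ι]

lemma sum_mul_sub_weightedMean_eq_zero (p x : ι → ℝ) (hps : ∑ i, p i = 1) :
    ∑ i, p i * (x i - ∑ j, p j * x j) = 0 := by
  simp only [mul_sub, sum_sub_distrib, ← sum_mul, hps, one_mul, sub_self]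

lemma mul_sum_mul_pow_three_add_sq_le {p y : ι → ℝ} {b : ℝ} (hp : ∀ i, 0 ≤ p i)
    (hps : ∑ i, p i = 1) (hy : ∑ i, p i * y i = 0) (hyb : ∀ i, y i ≤ b) (hb : 0 < b) :
    b * ∑ i, p i * y i ^ 3 + (∑ i, p i * y i ^ 2) ^ 2 ≤ b ^ 2 * ∑ i, p i * y i ^ 2 := by
  have hexpand (t : ℝ) : ∑ i, p i * ((b * y i + t) ^ 2 * (y i - b)) =
      b ^ 2 * ∑ i, p i * y i ^ 3 + (2 * b * t - b ^ 3) * ∑ i, p i * y i ^ 2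
        + (t ^ 2 - 2 * b ^ 2 * t) * ∑ i, p i * y i - b * t ^ 2 * ∑ i, p i := by
    simp only [mul_sum, ← sum_add_distrib, ← sum_sub_distrib]
    exact sum_congr rfl fun i _ => by ring
  set s := ∑ i, p i * y i ^ 2
  have hterm : ∑ i, p i * ((b * y i + s) ^ 2 * (y i - b)) ≤ 0 :=
    sum_nonpos fun i _ =>
      mul_nonpos_of_nonneg_of_nonpos (hp i)
        (mul_nonpos_of_nonneg_of_nonpos (sq_nonneg _) (sub_nonpos.2 (hyb i)))
  rw [hexpand, hy, hps] at hterm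
  have hfactored : b * (b * ∑ i, p i * y i ^ 3 + s ^ 2 - b ^ 2 * s) ≤ 0 := by linarith
  linarith [nonpos_of_mul_nonpos_right hfactored hb]

lemma sum_mul_sq_mul_sum_mul_pow_three_le {p y : ι → ℝ} {b : ℝ} (hp : ∀ i, 0 ≤ p i)
    (hps : ∑ i, p i = 1) (hy : ∑ i, p i * y i = 0) (hyb : ∀ i, y i ≤ b) :
    (∑ i, p i * y i ^ 2) * ∑ i, p i * y i ^ 3 ≤ 4 / 27 * b ^ 5 := by
  have hb : 0 ≤ b := by
    calc (0 : ℝ) = ∑ i, p i * y i := hy.symm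
      _ ≤ ∑ i, p i * b := sum_le_sum fun i _ => mul_le_mul_of_nonneg_left (hyb i) (hp i)
      _ = b := by rw [← sum_mul, hps, one_mul]
  have hs : 0 ≤ ∑ i, p i * y i ^ 2 := sum_nonneg fun i _ => mul_nonneg (hp i) (sq_nonneg _)
  rcases hb.eq_or_lt with rfl | hb
  · have hc : ∑ i, p i * y i ^ 3 ≤ 0 := sum_nonpos fun i _ =>
      mul_nonpos_of_nonneg_of_nonpos (hp i) ((Odd.pow_nonpos_iff (by decide)).2 (hyb i))
    simpa using mul_nonpos_of_nonneg_of_nonpos hs hc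
  · exact mul_le_of_mul_add_sq_le hb hs (mul_sum_mul_pow_three_add_sq_le hp hps hy hyb hb)

end CentralMoments

theorem stmt_12 (n : ℕ) (m M : ℝ) (x p : Fin n → ℝ)
    (hx : ∀ i, x i ∈ Set.Icc m M) (hp : ∀ i, 0 ≤ p i) (hps : ∑ i, p i = 1)
    (μ1 μ2 μ3 : ℝ)
    (hμ1 : μ1 = ∑ i, p i * x i)
    (hμ2 : μ2 = ∑ i, p i * (x i - μ1) ^ 2)
    (hμ3 : μ3 = ∑ i, p i * (x i - μ1) ^ 3) :
    -(4 / 27) * (μ1 - m) ^ 5 ≤ μ2 * μ3 ∧ μ2 * μ3 ≤ (4 / 27) * (M - μ1) ^ 5 := by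
  have hcentered : ∑ i, p i * (x i - μ1) = 0 := hμ1 ▸ sum_mul_sub_weightedMean_eq_zero p x hps
  constructor
  · have hreflected : ∑ i, p i * (μ1 - x i) = 0 := by
      rw [← neg_eq_zero, ← hcentered, ← sum_neg_distrib]
      exact sum_congr rfl fun i _ => by ring
    have h := sum_mul_sq_mul_sum_mul_pow_three_le hp hps hreflected
      (fun i => sub_le_sub_left (hx i).1 μ1)
    have h2 : ∑ i, p i * (μ1 - x i) ^ 2 = μ2 := by
      rw [hμ2]; exact sum_congr rfl fun i _ => by ring
    have h3 : ∑ i, p i * (μ1 - x i) ^ 3 = -μ3 := by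
      rw [hμ3, ← sum_neg_distrib]; exact sum_congr rfl fun i _ => by ring
    rw [h2, h3] at h
    linarith
  · rw [hμ2, hμ3]
    exact sum_mul_sq_mul_sum_mul_pow_three_le hp hps hcentered
      (fun i => sub_le_sub_right (hx i).2 μ1)
end
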